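/- arXiv:2101.11756 — 4 statements merged into one kernel-verified Lean document; each statement's English description precedes it below -/
import Mathlib

section
/- Let q be an odd prime power with characteristic p. If {x_k}_{k∈[n]} in 𝔽_{q²}^d is an (a,c₁,c₂)-projective 2-design with c₂ ≠ 0, then for every matrix A ∈ 𝔽_{q²}^{d×d}, A = (2/c₂) Σ_{k∈[n]} x_k x_k^* A x_k x_k^* − tr(A)·I_d. -/
open Matrix Kronecker BigOperators

/-- The Hermitian form `⟨u, v⟩ = ∑ᵢ uᵢ^q vᵢ`, with conjugation the Frobenius `a ↦ a^q`. -/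
def hermForm {F : Type*} [Field F] {ι : Type*} [Fintype ι] (q : ℕ) (u v : ι → F) : F :=
  ∑ i, (u i) ^ q * v i

/-- The rank-one matrix `x x^*`, with conjugation `a ↦ a^q`. -/
def rankOne {F : Type*} [Field F] {d : ℕ} (q : ℕ) (x : Fin d → F) :
    Matrix (Fin d) (Fin d) F :=
  vecMulVec x (fun i => (x i) ^ q)

/-- The tensor square `x ⊗ x`. -/
def tensorSq {F : Type*} [Field F] {d : ℕ} (x : Fin d → F) : Fin d × Fin d → F :=
  fun p => x p.1 * x p.2

/-- The matrix `Π_d^{(2)} = ½ ∑ᵢⱼ (eᵢeᵢ^* ⊗ eⱼeⱼ^* + eᵢeⱼ^* ⊗ eⱼeᵢ^*)`. -/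
noncomputable def symProj (F : Type*) [Field F] (d : ℕ) :
    Matrix (Fin d × Fin d) (Fin d × Fin d) F :=
  (2 : F)⁻¹ • ∑ i : Fin d, ∑ j : Fin d,
    (Matrix.single i i (1 : F) ⊗ₖ Matrix.single j j (1 : F)
      + Matrix.single i j (1 : F) ⊗ₖ Matrix.single j i (1 : F))

/-- `{xₖ}` is an `(a, c₁, c₂)`-projective 2-design for `𝔽_{q²}^d` (with `a, c₁, c₂`
in the subfield `𝔽_q`, i.e. fixed by the Frobenius). -/
noncomputable def IsProj2Design {F : Type*} [Field F] (q d n : ℕ)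
    (x : Fin n → Fin d → F) (a c₁ c₂ : F) : Prop :=
  a ^ q = a ∧ c₁ ^ q = c₁ ∧ c₂ ^ q = c₂ ∧
  (∀ k, hermForm q (x k) (x k) = a) ∧
  (∑ k, rankOne q (x k)) = c₁ • (1 : Matrix (Fin d) (Fin d) F) ∧
  (∑ k, vecMulVec (tensorSq (x k)) (fun p => (tensorSq (x k) p) ^ q))
    = c₂ • symProj F d

/-! The map `A ↦ ∑ₖ xₖxₖ^* A xₖxₖ^*` is the contraction of the middle pair of indices of the
fourth-moment matrix `∑ₖ (xₖ^{⊗2})(xₖ^{⊗2})^*` against `A`. The design property replaces that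
matrix by `c₂ Π_d^{(2)}`, and the two terms of `Π_d^{(2)}` (identity and swap) contract to `A`
and `tr(A) I`. Odd characteristic makes `2` invertible. -/

lemma FiniteField.two_ne_zero_of_odd_card {F : Type*} [Field F] [Fintype F]
    (h : Odd (Fintype.card F)) : (2 : F) ≠ 0 :=
  Ring.two_ne_zero fun hchar =>
    Nat.not_even_iff_odd.mpr h (Nat.even_iff.mpr (FiniteField.even_card_iff_char_two.mp hchar))

lemma symProj_apply {F : Type*} [Field F] {d : ℕ} (r m l s : Fin d) :
    symProj F d (r, m) (l, s) =
      (2 : F)⁻¹ * ((1 : Matrix (Fin d) (Fin d) F) r l * (1 : Matrix (Fin d) (Fin d) F) m s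
        + (1 : Matrix (Fin d) (Fin d) F) r s * (1 : Matrix (Fin d) (Fin d) F) m l) := by
  simp only [symProj, Matrix.smul_apply, Matrix.sum_apply, Matrix.add_apply, kroneckerMap_apply,
    single_apply, one_apply, smul_eq_mul]
  congr 1
  simp [ite_and, Finset.sum_add_distrib, mul_ite, eq_comm]
  by_cases h : r = s <;> simp [h]

def contractMiddle {R : Type*} [CommSemiring R] {ι : Type*} [Fintype ι]
    (M : Matrix (ι × ι) (ι × ι) R) (A : Matrix ι ι R) : Matrix ι ι R :=
  of fun r s => ∑ l, ∑ m, M (r, m) (l, s) * A l m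

lemma contractMiddle_smul {R : Type*} [CommSemiring R] {ι : Type*} [Fintype ι]
    (c : R) (M : Matrix (ι × ι) (ι × ι) R) (A : Matrix ι ι R) :
    contractMiddle (c • M) A = c • contractMiddle M A := by
  ext r s
  simp [contractMiddle, Finset.mul_sum, mul_assoc]

lemma sum_rankOne_mul_mul_rankOne {F : Type*} [Field F] {d n : ℕ} (q : ℕ)
    (x : Fin n → Fin d → F) (A : Matrix (Fin d) (Fin d) F) :
    ∑ k, rankOne q (x k) * A * rankOne q (x k) =
      contractMiddle (∑ k, vecMulVec (tensorSq (x k)) (fun p => tensorSq (x k) p ^ q)) A := by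
  ext r s
  simp only [contractMiddle, Matrix.sum_apply, mul_apply, rankOne, vecMulVec_apply, tensorSq,
    of_apply, Finset.sum_mul]
  rw [Finset.sum_comm]
  conv_rhs => rw [Finset.sum_comm]
  refine Finset.sum_congr rfl fun m _ => ?_
  rw [Finset.sum_comm]
  exact Finset.sum_congr rfl fun l _ => Finset.sum_congr rfl fun k _ => by ring

lemma contractMiddle_symProj {F : Type*} [Field F] {d : ℕ} (A : Matrix (Fin d) (Fin d) F) :
    contractMiddle (symProj F d) A = (2 : F)⁻¹ • (A + A.trace • 1) := by
  ext r s
  simp [contractMiddle, symProj_apply, one_apply, trace, mul_add, add_mul, Finset.sum_add_distrib,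
    ite_mul, Finset.mul_sum]

theorem design_decomposition_of_matrices_general
    (q d n : ℕ) (hodd : Odd q)
    (F : Type*) [Field F] [Fintype F] (hcard : Fintype.card F = q ^ 2)
    (x : Fin n → Fin d → F) (a c₁ c₂ : F)
    (hdesign : IsProj2Design q d n x a c₁ c₂) (hc₂ : c₂ ≠ 0)
    (A : Matrix (Fin d) (Fin d) F) :
    A = (2 / c₂) • (∑ j, rankOne q (x j) * A * rankOne q (x j))
          - A.trace • (1 : Matrix (Fin d) (Fin d) F) := by
  have h2 : (2 : F) ≠ 0 := FiniteField.two_ne_zero_of_odd_card (hcard ▸ hodd.pow)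
  obtain ⟨-, -, -, -, -, hfourthMoment⟩ := hdesign
  have hscalar : 2 / c₂ * c₂ * (2 : F)⁻¹ = 1 := by field_simp
  rw [sum_rankOne_mul_mul_rankOne, hfourthMoment, contractMiddle_smul, contractMiddle_symProj,
    smul_smul, smul_smul, hscalar, one_smul, add_sub_cancel_right]

/-- Lemma 3.8: if `{xₖ}` is an `(a,c₁,c₂)`-projective 2-design with `c₂ ≠ 0`, then
`A = (2/c₂) ∑ₖ xₖxₖ^* A xₖxₖ^* − tr(A)·I` for every `A`. -/
theorem design_decomposition_of_matrices
    (q p k d n : ℕ) (hp : p.Prime) (hq : q = p ^ k) (hodd : Odd q)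
    (F : Type*) [Field F] [Fintype F] (hcard : Fintype.card F = q ^ 2)
    (x : Fin n → Fin d → F) (a c₁ c₂ : F)
    (hdesign : IsProj2Design q d n x a c₁ c₂) (hc₂ : c₂ ≠ 0)
    (A : Matrix (Fin d) (Fin d) F) :
    A = (2 / c₂) • (∑ j, rankOne q (x j) * A * rankOne q (x j))
          - A.trace • (1 : Matrix (Fin d) (Fin d) F) :=
  design_decomposition_of_matrices_general q d n hodd F hcard x a c₁ c₂ hdesign hc₂ A
end

section
/- Let p be prime, k a positive integer, r a prime power such that p divides r−1 and d := r²+r+1 divides p^k+1, and put q := p^k. With D ⊆ ℤ/dℤ the Singer difference set (a planar difference set with λ=1), ω a primitive d-th root of unity in 𝔽_{q²}, and translation/modulation operators (Tf)(x)=f(x−1), (Mf)(x)=ω^x f(x) on functions ℤ/dℤ → 𝔽_{q²}, the collection {M^s T^t 1_D}_{s,t∈ℤ/dℤ} is a (2,1,2d)-equiangular tight frame of d² vectors in 𝔽_{q²}^d. -/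
open Matrix BigOperators

namespace SingerETF

variable {F : Type*} [Field F] {d : ℕ} [NeZero d]

/-- The additive character `a ↦ ω ^ a.val`. -/
def chi (ω : F) (a : ZMod d) : F := ω ^ a.val

lemma chi_add (ω : F) (hω : orderOf ω = d) (a b : ZMod d) :
    chi ω (a + b) = chi ω a * chi ω b := by
  unfold chi
  rw [ZMod.val_add, ← pow_add]
  have h := pow_mod_orderOf (x := ω) (n := a.val + b.val)
  rw [hω] at h
  exact h

lemma chi_zero (ω : F) : chi (d := d) ω 0 = 1 := by
  simp [chi]

lemma chi_eq_one_iff (ω : F) (hω : orderOf ω = d) (a : ZMod d) :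
    chi ω a = 1 ↔ a = 0 := by
  constructor
  · intro h
    have h2 : d ∣ a.val := by
      have h5 := orderOf_dvd_of_pow_eq_one h
      rwa [hω] at h5
    have h3 : a.val = 0 := Nat.eq_zero_of_dvd_of_lt h2 (ZMod.val_lt a)
    exact (ZMod.val_eq_zero a).mp h3
  · rintro rfl; exact chi_zero ω

lemma chi_mul_neg (ω : F) (hω : orderOf ω = d) (a : ZMod d) :
    chi ω a * chi ω (-a) = 1 := by
  rw [← chi_add ω hω]
  simp [chi]

lemma chi_pow (ω : F) (hω : orderOf ω = d) (q : ℕ) (hdiv : d ∣ q + 1) (a : ZMod d) :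
    (chi ω a) ^ q = chi ω (-a) := by
  have hq1 : ω ^ (q + 1) = 1 := orderOf_dvd_iff_pow_eq_one.mp (hω ▸ hdiv)
  have h1 : chi ω a ^ q * chi ω a = 1 := by
    unfold chi
    rw [← pow_mul, ← pow_add]
    have h2 : a.val * q + a.val = (q + 1) * a.val := by ring
    rw [h2, pow_mul, hq1, one_pow]
  have h2 := chi_mul_neg ω hω a
  calc chi ω a ^ q = chi ω a ^ q * (chi ω a * chi ω (-a)) := by rw [h2, mul_one]
    _ = (chi ω a ^ q * chi ω a) * chi ω (-a) := by ring
    _ = chi ω (-a) := by rw [h1, one_mul]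

lemma sum_chi (ω : F) (hω : orderOf ω = d) {m : ZMod d} (hm : m ≠ 0) :
    ∑ x : ZMod d, chi ω (m * x) = 0 := by
  have key : ∑ x : ZMod d, chi ω (m * (x + 1)) = ∑ x : ZMod d, chi ω (m * x) :=
    Fintype.sum_equiv (Equiv.addRight 1) _ _ (fun x => by simp)
  have key2 : ∀ x : ZMod d, chi ω (m * (x + 1)) = chi ω (m * x) * chi ω m := by
    intro x
    rw [← chi_add ω hω]
    congr 1
    ring
  rw [Finset.sum_congr rfl (fun x _ => key2 x), ← Finset.sum_mul] at key
  have h3 : chi ω m ≠ 1 := fun h => hm ((chi_eq_one_iff ω hω m).mp h)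
  have h4 : (∑ x : ZMod d, chi ω (m * x)) * (chi ω m - 1) = 0 := by
    rw [mul_sub, key, mul_one, sub_self]
  rcases mul_eq_zero.mp h4 with h | h
  · exact h
  · exact absurd (by linear_combination h : chi ω m = 1) h3

end SingerETF

open SingerETF

/-- Theorem 3.14: with `p` prime, `p ∣ r − 1`, `d = r² + r + 1` dividing `q + 1`
for `q = p^k`, `D ⊆ ℤ/dℤ` a planar (λ = 1) difference set of size `r + 1`, and
`ω ∈ 𝔽_{q²}` a primitive `d`-th root of unity, the Gabor family
`{MˢTᵗ𝟙_D}_{s,t ∈ ℤ/dℤ}` given by `(MˢTᵗ𝟙_D)(x) = ω^{sx}·𝟙_D(x − t)` is a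
`(2, 1, 2d)`-equiangular tight frame of `d²` vectors in `𝔽_{q²}^d`. -/
theorem singer_gabor_etf
    (p k r q d : ℕ) (hp : p.Prime) (hk : 0 < k) (hq : q = p ^ k)
    (hr : IsPrimePow r) (hpr : p ∣ r - 1) (hr1 : 1 ≤ r)
    (hd : d = r ^ 2 + r + 1) [NeZero d] (hdiv : d ∣ q + 1)
    (F : Type*) [Field F] [Fintype F] (hcard : Fintype.card F = q ^ 2)
    (D : Finset (ZMod d)) (hD : D.card = r + 1)
    (hDiff : ∀ g : ZMod d, g ≠ 0 →
      ((D ×ˢ D).filter (fun ab => ab.1 - ab.2 = g)).card = 1)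
    (ω : F) (hω : orderOf ω = d)
    (v : ZMod d → ZMod d → ZMod d → F)
    (hv : ∀ s t x, v s t x = ω ^ (s * x).val * (if x - t ∈ D then (1 : F) else 0)) :
    (∀ s t : ZMod d, hermForm q (v s t) (v s t) = 2) ∧
    (∀ s t u w : ZMod d, (s, t) ≠ (u, w) →
      hermForm q (v s t) (v u w) * hermForm q (v u w) (v s t) = 1) ∧
    (∑ s : ZMod d, ∑ t : ZMod d,
        vecMulVec (v s t) (fun i => (v s t i) ^ q))
      = (2 * d : F) • (1 : Matrix (ZMod d) (ZMod d) F) := by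
  classical
  have hq0 : q ≠ 0 := by rw [hq]; exact pow_ne_zero k hp.pos.ne'
  -- characteristic facts
  have hpF : (p : F) = 0 := by
    have h1 : ((q ^ 2 : ℕ) : F) = 0 := by rw [← hcard]; exact Nat.cast_card_eq_zero F
    rw [hq, ← pow_mul] at h1
    have h2 : ((p : F)) ^ (k * 2) = 0 := by exact_mod_cast h1
    exact pow_eq_zero_iff (by omega : k * 2 ≠ 0) |>.mp h2
  have hrF : (r : F) = 1 := by
    obtain ⟨c, hc⟩ := hpr
    have h1 : r = p * c + 1 := by omega
    rw [h1]
    push_cast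
    rw [hpF]
    ring
  -- rewriting the vectors
  have hvq : ∀ s t x : ZMod d, (v s t x) ^ q
      = chi ω (-(s * x)) * (if x - t ∈ D then (1 : F) else 0) := by
    intro s t x
    rw [hv, mul_pow, show (ω : F) ^ (s * x).val = chi ω (s * x) from rfl,
      chi_pow ω hω q hdiv]
    congr 1
    split_ifs
    · exact one_pow q
    · exact zero_pow hq0
  have hermG : ∀ s t u w : ZMod d, hermForm q (v s t) (v u w)
      = ∑ x : ZMod d, chi ω ((u - s) * x) *
          ((if x - t ∈ D then (1 : F) else 0) * (if x - w ∈ D then (1 : F) else 0)) := by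
    intro s t u w
    unfold hermForm
    apply Finset.sum_congr rfl
    intro x _
    rw [hvq, hv, show (ω : F) ^ (u * x).val = chi ω (u * x) from rfl]
    have h1 : chi ω ((u - s) * x) = chi ω (-(s * x)) * chi ω (u * x) := by
      rw [← chi_add ω hω]
      congr 1
      ring
    rw [h1]
    ring
  -- cardinalities of shifted copies of D
  have hcardS : ∀ t : ZMod d,
      (Finset.univ.filter (fun x : ZMod d => x - t ∈ D)).card = r + 1 := by
    intro t
    rw [← hD]
    apply Finset.card_bij (fun x _ => x - t)
    · intro a ha
      exact (Finset.mem_filter.mp ha).2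
    · intro a _ b _ h
      have := congrArg (fun z => z + t) h
      simpa using this
    · intro b hb
      exact ⟨b + t, Finset.mem_filter.mpr ⟨Finset.mem_univ _, by simpa using hb⟩, by ring⟩
  have hcardS2 : ∀ i : ZMod d,
      (Finset.univ.filter (fun t : ZMod d => i - t ∈ D)).card = r + 1 := by
    intro i
    rw [← hD]
    apply Finset.card_bij (fun t _ => i - t)
    · intro a ha
      exact (Finset.mem_filter.mp ha).2
    · intro a _ b _ h
      have := congrArg (fun z => i - z) h
      simpa using this
    · intro b hb
      exact ⟨i - b, Finset.mem_filter.mpr ⟨Finset.mem_univ _, by simpa using hb⟩, by ring⟩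
  -- uniqueness of common element of two distinct translates
  have huniq : ∀ t w : ZMod d, t ≠ w → ∃ x₀ : ZMod d,
      (x₀ - t ∈ D ∧ x₀ - w ∈ D) ∧ ∀ x : ZMod d, x - t ∈ D → x - w ∈ D → x = x₀ := by
    intro t w htw
    have hg : (w - t : ZMod d) ≠ 0 := sub_ne_zero.mpr (Ne.symm htw)
    obtain ⟨ab, hab⟩ := Finset.card_eq_one.mp (hDiff (w - t) hg)
    have hmem : ab ∈ (D ×ˢ D).filter (fun p => p.1 - p.2 = w - t) :=
      hab ▸ Finset.mem_singleton_self ab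
    rw [Finset.mem_filter, Finset.mem_product] at hmem
    refine ⟨ab.1 + t, ⟨by simpa using hmem.1.1, ?_⟩, ?_⟩
    · have h2 : ab.1 + t - w = ab.2 := by
        have h3 := hmem.2
        linear_combination h3
      rw [h2]
      exact hmem.1.2
    · intro x hx1 hx2
      have hp : (x - t, x - w) ∈ (D ×ˢ D).filter (fun p => p.1 - p.2 = w - t) := by
        rw [Finset.mem_filter, Finset.mem_product]
        exact ⟨⟨hx1, hx2⟩, by ring⟩
      rw [hab, Finset.mem_singleton] at hp
      have h4 : x - t = ab.1 := congrArg Prod.fst hp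
      linear_combination h4
  -- the diagonal values
  have hdiagF : ∀ s t : ZMod d, hermForm q (v s t) (v s t) = 2 := by
    intro s t
    rw [hermG s t s t, sub_self]
    have h1 : ∀ x : ZMod d, chi ω ((0 : ZMod d) * x) *
        ((if x - t ∈ D then (1 : F) else 0) * (if x - t ∈ D then (1 : F) else 0))
        = if x - t ∈ D then (1 : F) else 0 := by
      intro x
      rw [zero_mul, chi_zero, one_mul]
      split_ifs <;> simp
    rw [Finset.sum_congr rfl (fun x _ => h1 x), ← Finset.sum_filter,
      Finset.sum_const, hcardS t, nsmul_eq_mul, mul_one]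
    push_cast
    rw [hrF]
    ring
  -- equiangularity, case t ≠ w
  have hherm_ne : ∀ s t u w : ZMod d, t ≠ w →
      hermForm q (v s t) (v u w) * hermForm q (v u w) (v s t) = 1 := by
    intro s t u w htw
    obtain ⟨x₀, ⟨hx1, hx2⟩, hxu⟩ := huniq t w htw
    have hz : ∀ (a b m : ZMod d),
        (∀ x : ZMod d, x - a ∈ D → x - b ∈ D → x = x₀) →
        (∑ x : ZMod d, chi ω (m * x) *
          ((if x - a ∈ D then (1 : F) else 0) * (if x - b ∈ D then (1 : F) else 0)))
        = chi ω (m * x₀) *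
          ((if x₀ - a ∈ D then (1 : F) else 0) * (if x₀ - b ∈ D then (1 : F) else 0)) := by
      intro a b m hu
      apply Finset.sum_eq_single
      · intro x _ hx
        by_cases h1 : x - a ∈ D
        · by_cases h2 : x - b ∈ D
          · exact absurd (hu x h1 h2) hx
          · simp [h2]
        · simp [h1]
      · intro h
        exact absurd (Finset.mem_univ x₀) h
    rw [hermG s t u w, hermG u w s t,
      hz t w (u - s) hxu, hz w t (s - u) (fun x h1 h2 => hxu x h2 h1)]
    simp only [if_pos hx1, if_pos hx2, mul_one, one_mul]
    rw [← chi_add ω hω, show (u - s) * x₀ + (s - u) * x₀ = 0 by ring]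
    exact chi_zero ω
  -- equiangularity, case t = w, s ≠ u
  have hherm_eq : ∀ s t u : ZMod d, s ≠ u →
      hermForm q (v s t) (v u t) * hermForm q (v u t) (v s t) = 1 := by
    intro s t u hsu
    set S : Finset (ZMod d) := Finset.univ.filter (fun x => x - t ∈ D) with hS
    have hconv : ∀ m' : ZMod d,
        (∑ x : ZMod d, chi ω (m' * x) *
          ((if x - t ∈ D then (1 : F) else 0) * (if x - t ∈ D then (1 : F) else 0)))
        = ∑ x ∈ S, chi ω (m' * x) := by
      intro m'
      rw [hS, Finset.sum_filter]
      apply Finset.sum_congr rfl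
      intro x _
      by_cases h : x - t ∈ D <;> simp [h]
    rw [hermG s t u t, hermG u t s t, hconv, hconv, Finset.sum_mul_sum]
    have hsplit : ∀ i j : ZMod d, chi ω ((u - s) * i) * chi ω ((s - u) * j)
        = chi ω ((u - s) * (i - j)) := by
      intro i j
      rw [← chi_add ω hω]
      congr 1
      ring
    simp only [hsplit]
    rw [← Finset.sum_product', ← Finset.diag_union_offDiag S,
      Finset.sum_union (Finset.disjoint_diag_offDiag S)]
    have hdiag : (∑ p ∈ S.diag, chi ω ((u - s) * (p.1 - p.2))) = ((r : F) + 1) := by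
      rw [Finset.sum_diag]
      have h1 : ∀ a ∈ S, chi ω ((u - s) * (a - a)) = 1 := by
        intro a _
        rw [sub_self, mul_zero]
        exact chi_zero ω
      rw [Finset.sum_congr rfl h1, Finset.sum_const, hS, hcardS t, nsmul_eq_mul, mul_one]
      push_cast
      ring
    have hm0 : (u - s : ZMod d) ≠ 0 := sub_ne_zero.mpr (Ne.symm hsu)
    have hoff : (∑ p ∈ S.offDiag, chi ω ((u - s) * (p.1 - p.2)))
        = ∑ g ∈ Finset.univ.erase (0 : ZMod d), chi ω ((u - s) * g) := by
      apply Finset.sum_bij (fun p _ => p.1 - p.2)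
      · intro a ha
        rw [Finset.mem_offDiag] at ha
        exact Finset.mem_erase.mpr ⟨sub_ne_zero.mpr ha.2.2, Finset.mem_univ _⟩
      · intro a ha b hb h
        rw [Finset.mem_offDiag] at ha hb
        have ha1 : a.1 - t ∈ D := by have := ha.1; rw [hS, Finset.mem_filter] at this; exact this.2
        have ha2 : a.2 - t ∈ D := by have := ha.2.1; rw [hS, Finset.mem_filter] at this; exact this.2
        have hb1 : b.1 - t ∈ D := by have := hb.1; rw [hS, Finset.mem_filter] at this; exact this.2
        have hb2 : b.2 - t ∈ D := by have := hb.2.1; rw [hS, Finset.mem_filter] at this; exact this.2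
        have hg0 : a.1 - a.2 ≠ 0 := sub_ne_zero.mpr ha.2.2
        obtain ⟨ab, hab⟩ := Finset.card_eq_one.mp (hDiff (a.1 - a.2) hg0)
        have hma : (a.1 - t, a.2 - t) ∈
            (D ×ˢ D).filter (fun p => p.1 - p.2 = a.1 - a.2) := by
          rw [Finset.mem_filter, Finset.mem_product]
          exact ⟨⟨ha1, ha2⟩, by ring⟩
        have hmb : (b.1 - t, b.2 - t) ∈
            (D ×ˢ D).filter (fun p => p.1 - p.2 = a.1 - a.2) := by
          rw [Finset.mem_filter, Finset.mem_product]
          refine ⟨⟨hb1, hb2⟩, ?_⟩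
          show (b.1 - t) - (b.2 - t) = a.1 - a.2
          linear_combination -h
        rw [hab, Finset.mem_singleton] at hma hmb
        have hpair : ((a.1 - t, a.2 - t) : ZMod d × ZMod d) = (b.1 - t, b.2 - t) :=
          hma.trans hmb.symm
        have h1 : a.1 - t = b.1 - t := congrArg Prod.fst hpair
        have h2 : a.2 - t = b.2 - t := congrArg Prod.snd hpair
        have e1 : a.1 = b.1 := by linear_combination h1
        have e2 : a.2 = b.2 := by linear_combination h2
        exact Prod.ext e1 e2
      · intro g hg
        rw [Finset.mem_erase] at hg
        obtain ⟨ab, hab⟩ := Finset.card_eq_one.mp (hDiff g hg.1)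
        have hmem : ab ∈ (D ×ˢ D).filter (fun p => p.1 - p.2 = g) :=
          hab ▸ Finset.mem_singleton_self ab
        rw [Finset.mem_filter, Finset.mem_product] at hmem
        refine ⟨(ab.1 + t, ab.2 + t), ?_, by simpa using hmem.2⟩
        rw [Finset.mem_offDiag]
        refine ⟨?_, ?_, ?_⟩
        · rw [hS, Finset.mem_filter]
          exact ⟨Finset.mem_univ _, by simpa using hmem.1.1⟩
        · rw [hS, Finset.mem_filter]
          exact ⟨Finset.mem_univ _, by simpa using hmem.1.2⟩
        · intro h
          apply hg.1
          rw [← hmem.2]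
          have : ab.1 = ab.2 := by
            have := congrArg (fun z => z - t) h
            simpa using this
          rw [this, sub_self]
      · intro a ha
        rfl
    have herase : (∑ g ∈ Finset.univ.erase (0 : ZMod d), chi ω ((u - s) * g)) = -1 := by
      have h1 : (∑ g ∈ Finset.univ.erase (0 : ZMod d), chi ω ((u - s) * g))
          + chi ω ((u - s) * 0) = ∑ g : ZMod d, chi ω ((u - s) * g) :=
        Finset.sum_erase_add Finset.univ (fun g => chi ω ((u - s) * g))
          (Finset.mem_univ (0 : ZMod d))
      rw [sum_chi ω hω hm0, mul_zero, chi_zero] at h1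
      linear_combination h1
    rw [hdiag, hoff, herase, hrF]
    ring
  refine ⟨hdiagF, ?_, ?_⟩
  · intro s t u w hne
    by_cases htw : t = w
    · subst htw
      have hsu : s ≠ u := fun h => hne (by rw [h])
      exact hherm_eq s t u hsu
    · exact hherm_ne s t u w htw
  · ext i j
    simp only [Matrix.sum_apply, Matrix.vecMulVec_apply]
    have hterm : ∀ s t : ZMod d, v s t i * (v s t j) ^ q
        = chi ω (s * (i - j)) *
          ((if i - t ∈ D then (1 : F) else 0) * (if j - t ∈ D then (1 : F) else 0)) := by
      intro s t
      rw [hv, hvq, show (ω : F) ^ (s * i).val = chi ω (s * i) from rfl]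
      have h1 : chi ω (s * (i - j)) = chi ω (s * i) * chi ω (-(s * j)) := by
        rw [← chi_add ω hω]
        congr 1
        ring
      rw [h1]
      ring
    simp only [hterm]
    have hfac : ∀ s : ZMod d,
        (∑ t : ZMod d, chi ω (s * (i - j)) *
          ((if i - t ∈ D then (1 : F) else 0) * (if j - t ∈ D then (1 : F) else 0)))
        = chi ω (s * (i - j)) * ∑ t : ZMod d,
          ((if i - t ∈ D then (1 : F) else 0) * (if j - t ∈ D then (1 : F) else 0)) :=
      fun s => (Finset.mul_sum _ _ _).symm
    rw [Finset.sum_congr rfl (fun s _ => hfac s), ← Finset.sum_mul,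
      Matrix.smul_apply, Matrix.one_apply]
    by_cases hij : i = j
    · subst hij
      have h1 : ∀ s : ZMod d, chi ω (s * (i - i)) = 1 := by
        intro s
        rw [sub_self, mul_zero]
        exact chi_zero ω
      rw [Finset.sum_congr rfl (fun s _ => h1 s), Finset.sum_const,
        Finset.card_univ, ZMod.card]
      have h2 : ∀ t : ZMod d,
          ((if i - t ∈ D then (1 : F) else 0) * (if i - t ∈ D then (1 : F) else 0))
          = if i - t ∈ D then (1 : F) else 0 := by
        intro t
        split_ifs <;> simp
      rw [Finset.sum_congr rfl (fun t _ => h2 t), ← Finset.sum_filter,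
        Finset.sum_const, hcardS2 i, if_pos rfl]
      simp only [nsmul_eq_mul, smul_eq_mul, mul_one]
      push_cast
      rw [hrF]
      ring
    · have h1 : (∑ s : ZMod d, chi ω (s * (i - j))) = 0 := by
        have h2 : ∀ s : ZMod d, chi ω (s * (i - j)) = chi ω ((i - j) * s) := by
          intro s
          congr 1
          ring
        rw [Finset.sum_congr rfl (fun s _ => h2 s)]
        exact sum_chi ω hω (sub_ne_zero.mpr hij)
      rw [h1, zero_mul, if_neg hij, smul_zero]
end

section
/- For any nonzero x ∈ ℍ^d, the set {x i x^*, x j x^*, x k x^*} is an orthogonal set in ℍ^{d×d} with ⟨xux^*, xvx^*⟩ = ‖x‖⁴ δ_{uv} for u,v ∈ {i,j,k}; consequently the real subspace S(x) := {x z x^* : z ∈ ℍ, Re z = 0} is 3-dimensional with orthogonal basis {x i x^*, x j x^*, x k x^*}. -/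
/-!
Since `x^* x = ∑ ‖x_k‖²` is real, hence central, `(x u x^*)^* (x v x^*) = ‖x‖² · x (u^* v) x^*`,
and `Re tr (x w x^*) = ‖x‖² Re w`; so `⟨x u x^*, x v x^*⟩ = ‖x‖⁴ Re (u^* v)`, and `i, j, k` are
orthonormal for `Re (u^* v)`. The real-linear map `z ↦ x z x^*` is injective when `x ≠ 0` (a
diagonal entry `x_k z x_k^*` with `x_k ≠ 0` vanishes only if `z = 0`), so it carries the basis
`i, j, k` of the purely imaginary quaternions to a basis of `S(x)`.
-/

open Matrix BigOperators

/-- The quaternion units `i, j, k`. -/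
def qunit : Fin 3 → Quaternion ℝ := ![⟨0,1,0,0⟩, ⟨0,0,1,0⟩, ⟨0,0,0,1⟩]

/-- The matrix `x z x^*` for `x ∈ ℍ^d`, `z ∈ ℍ`. -/
noncomputable def xzxStar {d : ℕ} (x : Fin d → Quaternion ℝ) (z : Quaternion ℝ) :
    Matrix (Fin d) (Fin d) (Quaternion ℝ) :=
  fun i j => x i * z * star (x j)

/-- The real inner product `⟨A,B⟩ = Re tr(A^*B)` on `ℍ^{d×d}`. -/
noncomputable def qmInner {d : ℕ} (A B : Matrix (Fin d) (Fin d) (Quaternion ℝ)) : ℝ :=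
  (Matrix.trace (Aᴴ * B)).re

open Quaternion

lemma Quaternion.re_sum {ι : Type*} (s : Finset ι) (f : ι → ℍ[ℝ]) :
    (∑ i ∈ s, f i).re = ∑ i ∈ s, (f i).re :=
  map_sum (QuaternionAlgebra.reₗ (-1 : ℝ) 0 (-1)) f s

lemma Quaternion.re_mul_mul_star (p w : ℍ[ℝ]) : (p * w * star p).re = normSq p * w.re := by
  simp only [re_mul, imI_mul, imJ_mul, imK_mul, re_star, imI_star, imJ_star, imK_star, normSq_def']
  ring

section
variable {d : ℕ} (x : Fin d → ℍ[ℝ])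

lemma conjTranspose_xzxStar (z : ℍ[ℝ]) : (xzxStar x z)ᴴ = xzxStar x (star z) :=
  Matrix.ext fun i j => by simp [xzxStar, mul_assoc]

lemma xzxStar_mul_xzxStar (a b : ℍ[ℝ]) :
    xzxStar x a * xzxStar x b = (∑ k, normSq (x k)) • xzxStar x (a * b) := by
  refine Matrix.ext fun i j => ?_
  simp only [Matrix.mul_apply, Matrix.smul_apply, Finset.sum_smul, xzxStar]
  refine Finset.sum_congr rfl fun k _ => ?_
  calc x i * a * star (x k) * (x k * b * star (x j))
      = x i * a * (star (x k) * x k) * b * star (x j) := by noncomm_ring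
    _ = normSq (x k) • (x i * (a * b) * star (x j)) := by
      rw [star_mul_self, mul_coe_eq_smul]; simp [mul_assoc]

lemma re_trace_xzxStar (w : ℍ[ℝ]) :
    (trace (xzxStar x w)).re = (∑ i, normSq (x i)) * w.re := by
  rw [trace, Quaternion.re_sum, Finset.sum_mul]
  exact Finset.sum_congr rfl fun i _ => re_mul_mul_star (x i) w

lemma qmInner_xzxStar (u v : ℍ[ℝ]) :
    qmInner (xzxStar x u) (xzxStar x v) = (∑ i, normSq (x i)) ^ 2 * (star u * v).re := by
  rw [qmInner, conjTranspose_xzxStar, xzxStar_mul_xzxStar, trace_smul, re_smul,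
    re_trace_xzxStar, smul_eq_mul]
  ring

noncomputable def xzxStarLinearMap : ℍ[ℝ] →ₗ[ℝ] Matrix (Fin d) (Fin d) ℍ[ℝ] where
  toFun := xzxStar x
  map_add' a b := Matrix.ext fun i j => by simp [xzxStar, mul_add, add_mul]
  map_smul' r a := Matrix.ext fun i j => by simp [xzxStar]

lemma xzxStarLinearMap_apply (z : ℍ[ℝ]) : xzxStarLinearMap x z = xzxStar x z := rfl

lemma xzxStarLinearMap_injective (hx : x ≠ 0) : Function.Injective (xzxStarLinearMap x) := by
  refine (injective_iff_map_eq_zero _).2 fun z hz => ?_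
  obtain ⟨i, hi⟩ : ∃ i, x i ≠ 0 := Function.ne_iff.1 hx
  simpa [xzxStarLinearMap_apply, xzxStar, hi] using congrFun₂ hz i i

lemma linearIndependent_xzxStar {ι : Type*} {v : ι → ℍ[ℝ]} (hv : LinearIndependent ℝ v)
    (hx : x ≠ 0) : LinearIndependent ℝ (fun a => xzxStar x (v a)) :=
  hv.map' (xzxStarLinearMap x) (LinearMap.ker_eq_bot.2 (xzxStarLinearMap_injective x hx))

lemma xzxStar_sum_smul {ι : Type*} (s : Finset ι) (c : ι → ℝ) (v : ι → ℍ[ℝ]) :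
    xzxStar x (∑ a ∈ s, c a • v a) = ∑ a ∈ s, c a • xzxStar x (v a) := by
  simp only [← xzxStarLinearMap_apply, map_sum, map_smul]

end

lemma sum_smul_qunit (c : Fin 3 → ℝ) : ∑ a, c a • qunit a = ⟨0, c 0, c 1, c 2⟩ := by
  ext <;> simp only [Fin.sum_univ_three, re_add, imI_add, imJ_add, imK_add, re_smul, imI_smul,
    imJ_smul, imK_smul] <;> simp [qunit]

lemma re_star_qunit_mul_qunit (a b : Fin 3) :
    (star (qunit a) * qunit b).re = if a = b then 1 else 0 := by
  rw [re_mul, re_star, imI_star, imJ_star, imK_star]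
  fin_cases a <;> fin_cases b <;> simp [qunit]

lemma linearIndependent_qunit : LinearIndependent ℝ qunit := by
  refine Fintype.linearIndependent_iff.2 fun c hc a => ?_
  rw [sum_smul_qunit] at hc
  fin_cases a
  exacts [congrArg QuaternionAlgebra.imI hc, congrArg QuaternionAlgebra.imJ hc,
    congrArg QuaternionAlgebra.imK hc]

lemma re_eq_zero_iff_exists_sum_smul_qunit (z : ℍ[ℝ]) :
    z.re = 0 ↔ ∃ c : Fin 3 → ℝ, z = ∑ a, c a • qunit a := by
  simp only [sum_smul_qunit]
  refine ⟨fun hz => ⟨![z.imI, z.imJ, z.imK], ?_⟩, ?_⟩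
  · ext
    exacts [hz, rfl, rfl, rfl]
  · rintro ⟨c, rfl⟩
    rfl

/-- For `x ≠ 0`, `{xix^*, xjx^*, xkx^*}` is an orthogonal set with
`⟨xux^*, xvx^*⟩ = ‖x‖⁴ δ_{uv}`, and it is an (orthogonal) basis of the
3-dimensional real subspace `S(x) = {xzx^* : z ∈ ℍ, Re z = 0}`. -/
theorem xzx_orthogonal_basis (d : ℕ) (x : Fin d → Quaternion ℝ) (hx : x ≠ 0) :
    (∀ a b : Fin 3,
        qmInner (xzxStar x (qunit a)) (xzxStar x (qunit b))
          = if a = b then (∑ i, (star (x i) * x i).re) ^ 2 else 0) ∧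
    LinearIndependent ℝ (fun a : Fin 3 => xzxStar x (qunit a)) ∧
    (∀ M : Matrix (Fin d) (Fin d) (Quaternion ℝ),
        (∃ z : Quaternion ℝ, z.re = 0 ∧ M = xzxStar x z)
          ↔ ∃ c : Fin 3 → ℝ, M = ∑ a, c a • xzxStar x (qunit a)) := by
  refine ⟨fun a b => ?_, ?_, fun M => ?_⟩
  · simp only [qmInner_xzxStar, re_star_qunit_mul_qunit, star_mul_self, re_coe]
    split_ifs <;> simp
  · exact linearIndependent_xzxStar x linearIndependent_qunit hx
  · simp only [re_eq_zero_iff_exists_sum_smul_qunit]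
    constructor
    · rintro ⟨z, ⟨c, rfl⟩, rfl⟩
      exact ⟨c, xzxStar_sum_smul x _ c qunit⟩
    · rintro ⟨c, rfl⟩
      exact ⟨_, ⟨c, rfl⟩, (xzxStar_sum_smul x _ c qunit).symm⟩
end

section
/- For unit vectors x, y ∈ ℍ^d with x^*y ≠ 0, the 3×3 cross-Gramian G_{xy} with entries ⟨xux^*, yvy^*⟩ for u,v ∈ {i,j,k} satisfies G_{xy}^⊤ G_{xy} = |x^*y|⁴ · I₃. Consequently, if unit vectors {x_k}_{k∈[n]} in ℍ^d are equiangular (|x_k^* x_ℓ|² is constant over k ≠ ℓ), then the subspaces {S(x_k)}_{k∈[n]} are equi-isoclinic. -/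
/-! Put `q = x^*y`. A trace computation gives `⟨xux^*, yvy^*⟩ = ⟨u, q v q̄⟩` for the real inner
product of `ℍ ≅ ℝ⁴`, so the columns of `G_{xy}` are the coordinates of `q i q̄, q j q̄, q k q̄` in the
basis `i, j, k`. Since `v ↦ q v q̄` keeps imaginary quaternions imaginary and multiplies inner
products by `|q|⁴`, these columns are orthogonal of squared length `|q|⁴`. -/

open Matrix BigOperators

/-- The quaternionic inner product `x^*y = ∑ᵢ x̄ᵢ yᵢ`. -/
noncomputable def qvInner {d : ℕ} (x y : Fin d → Quaternion ℝ) : Quaternion ℝ :=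
  ∑ i, star (x i) * y i

/-- The `3×3` cross-Gramian of `S(x)` and `S(y)`, with entries
`⟨xux^*, yvy^*⟩` for `u, v ∈ {i,j,k}`. -/
noncomputable def crossGram {d : ℕ} (x y : Fin d → Quaternion ℝ) : Matrix (Fin 3) (Fin 3) ℝ :=
  fun a b => qmInner (xzxStar x (qunit a)) (xzxStar y (qunit b))

open scoped Quaternion RealInnerProductSpace

namespace Quaternion

lemma re_sum_s17 {ι : Type*} (s : Finset ι) (f : ι → ℍ) :
    (∑ i ∈ s, f i).re = ∑ i ∈ s, (f i).re :=
  map_sum (QuaternionAlgebra.reₗ (-1) 0 (-1) : ℍ →ₗ[ℝ] ℝ) f s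

lemma re_mul_comm (a b : ℍ) : (a * b).re = (b * a).re := by
  simp only [re_mul]; ring

lemma inner_def' (a b : ℍ) :
    ⟪a, b⟫ = a.re * b.re + a.imI * b.imI + a.imJ * b.imJ + a.imK * b.imK := by
  simp only [inner_def, re_mul, re_star, imI_star, imJ_star, imK_star]; ring

lemma inner_eq_re_star_mul (a b : ℍ) : ⟪a, b⟫ = (star a * b).re := by
  rw [inner_def, re_mul_comm, ← re_star, star_mul, star_star]

lemma re_mul_mul_star_s17 (q u : ℍ) : (q * u * star q).re = normSq q * u.re := by
  rw [re_mul_comm, ← mul_assoc, star_mul_self, coe_mul_eq_smul, re_smul, smul_eq_mul]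

lemma inner_mul_mul_star (q u v : ℍ) :
    ⟪q * u * star q, q * v * star q⟫ = normSq q ^ 2 * ⟪u, v⟫ := by
  have h : star (q * u * star q) * (q * v * star q) = q * (normSq q • (star u * v)) * star q :=
    calc star (q * u * star q) * (q * v * star q) = q * (star u * (star q * q) * v) * star q := by
          simp only [star_mul, star_star, mul_assoc]
      _ = q * (normSq q • (star u * v)) * star q := by
          rw [star_mul_self, mul_coe_eq_smul, smul_mul_assoc]
  rw [inner_eq_re_star_mul, h, re_mul_mul_star_s17, re_smul, smul_eq_mul, inner_eq_re_star_mul]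
  ring

end Quaternion

open Quaternion

lemma inner_qunit_qunit (a b : Fin 3) :
    ⟪qunit a, qunit b⟫ = (1 : Matrix (Fin 3) (Fin 3) ℝ) a b := by
  rw [inner_def']
  fin_cases a <;> fin_cases b <;> simp [qunit]

lemma sum_inner_qunit_mul_inner_qunit {w : ℍ} (hw : w.re = 0) (w' : ℍ) :
    ∑ a, ⟪qunit a, w⟫ * ⟪qunit a, w'⟫ = ⟪w, w'⟫ := by
  simp [Fin.sum_univ_three, inner_def', qunit, hw]

lemma star_qvInner {d : ℕ} (x y : Fin d → ℍ) : star (qvInner x y) = qvInner y x := by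
  simp only [qvInner, star_sum, star_mul, star_star]

lemma qmInner_xzxStar_s17 {d : ℕ} (x y : Fin d → ℍ) (u v : ℍ) :
    qmInner (xzxStar x u) (xzxStar y v) = ⟪u, qvInner x y * v * star (qvInner x y)⟫ := by
  have hdiag : ∀ i, ((xzxStar x u)ᴴ * xzxStar y v) i i
      = x i * (star u * qvInner x y * v) * star (y i) := by
    intro i
    simp only [mul_apply, conjTranspose_apply, xzxStar, star_mul, star_star, qvInner,
      Finset.mul_sum, Finset.sum_mul, mul_assoc]
  calc qmInner (xzxStar x u) (xzxStar y v)
      = ∑ i, (star u * qvInner x y * v * (star (y i) * x i)).re := by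
        simp only [qmInner, trace, diag_apply, hdiag, re_sum_s17]
        exact Finset.sum_congr rfl fun i _ => by rw [mul_assoc, re_mul_comm, mul_assoc]
    _ = (star u * qvInner x y * v * qvInner y x).re := by
        rw [← re_sum_s17, ← Finset.mul_sum]; rfl
    _ = ⟪u, qvInner x y * v * star (qvInner x y)⟫ := by
        rw [inner_eq_re_star_mul, star_qvInner]
        simp only [mul_assoc]

lemma crossGram_eq_inner {d : ℕ} (x y : Fin d → ℍ) (a b : Fin 3) :
    crossGram x y a b = ⟪qunit a, qvInner x y * qunit b * star (qvInner x y)⟫ :=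
  qmInner_xzxStar_s17 x y _ _

lemma crossGram_transpose_mul_self {d : ℕ} (x y : Fin d → ℍ) :
    (crossGram x y)ᵀ * crossGram x y
      = normSq (qvInner x y) ^ 2 • (1 : Matrix (Fin 3) (Fin 3) ℝ) := by
  ext b c
  have him : (qvInner x y * qunit b * star (qvInner x y)).re = 0 := by
    rw [re_mul_mul_star_s17]
    fin_cases b <;> simp [qunit]
  simp only [mul_apply, transpose_apply, crossGram_eq_inner, sum_inner_qunit_mul_inner_qunit him,
    inner_mul_mul_star, inner_qunit_qunit, Matrix.smul_apply, smul_eq_mul]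

/-- Theorem 4.4(a): for unit `x, y` with `x^*y ≠ 0`, the cross-Gramian satisfies
`G^⊤G = |x^*y|⁴ I₃`; consequently an equiangular family of unit vectors in `ℍ^d`
yields equi-isoclinic subspaces `S(xₖ)`. -/
theorem equiangular_gives_equiisoclinic (d : ℕ) :
    (∀ x y : Fin d → Quaternion ℝ,
        qvInner x x = 1 → qvInner y y = 1 → qvInner x y ≠ 0 →
        (crossGram x y)ᵀ * crossGram x y
          = ((Quaternion.normSq (qvInner x y)) ^ 2) •
              (1 : Matrix (Fin 3) (Fin 3) ℝ)) ∧
    (∀ n : ℕ, ∀ xs : Fin n → Fin d → Quaternion ℝ,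
        (∀ k, qvInner (xs k) (xs k) = 1) →
        (∃ c : ℝ, ∀ k ℓ, k ≠ ℓ → Quaternion.normSq (qvInner (xs k) (xs ℓ)) = c) →
        ∃ α : ℝ, 0 ≤ α ∧ ∀ k ℓ, k ≠ ℓ →
          (crossGram (xs k) (xs ℓ))ᵀ * crossGram (xs k) (xs ℓ)
            = α • (1 : Matrix (Fin 3) (Fin 3) ℝ)) := by
  refine ⟨fun x y _ _ _ => crossGram_transpose_mul_self x y, fun n xs _ ⟨c, hc⟩ => ?_⟩
  refine ⟨c ^ 2, sq_nonneg c, fun k ℓ hkℓ => ?_⟩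
  rw [crossGram_transpose_mul_self, hc k ℓ hkℓ]
end
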